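/- The algebra 𝔠₀₁ on ℂ⁵ with nonzero basis products e₁e₁ = e₂, e₂e₂ = e₃ is a nilpotent commutative algebra (A⁶ = 0) that satisfies the almost-Jordan identity 2·(((y·x)·x)·x) + y·((x·x)·x) = 3·((y·(x·x))·x) for all x, y, but does not satisfy the Jordan identity: there exist x, y with ((x·x)·y)·x ≠ (x·x)·(y·x). -/

import Mathlib

/-- `IsProdOf μ n z` says that `z` is a product of `n` elements under the
multiplication `μ`, with some arrangement of parentheses. -/
inductive IsProdOf {V : Type*} (μ : V → V → V) : ℕ → V → Prop
  | base (x : V) : IsProdOf μ 1 x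
  | mul {m n : ℕ} {a b : V} :
      IsProdOf μ m a → IsProdOf μ n b → IsProdOf μ (m + n) (μ a b)

/-- Structure constants of the algebra 𝔠₀₁ (e₁e₁ = e₂, e₂e₂ = e₃) on ℂ⁵ (basis `e₁, …, e₅` indexed by `Fin 5`),
extended symmetrically; unlisted products of basis vectors are zero. -/
noncomputable def tbl01 : Fin 5 → Fin 5 → Fin 5 → ℂ :=
  ![![![0,1,0,0,0], 0, 0, 0, 0],
    ![0, ![0,0,1,0,0], 0, 0, 0],
    0,
    0,
    0]

/-- The bilinear multiplication of the algebra on ℂ⁵. -/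
noncomputable def mul01 (x y : Fin 5 → ℂ) : Fin 5 → ℂ :=
  fun k => ∑ i, ∑ j, x i * y j * tbl01 i j k

/-!
In coordinates `mul01 a b = (0, a₀b₀, a₁b₁, 0, 0)`. Hence a product of at least two factors has
vanishing `0`-th coordinate, a product of at least three factors also has vanishing `1`-st
coordinate, and such an element annihilates the whole algebra: `A³ · A = 0`. A product of five
or more factors splits as `a · b` with `a` or `b` a product of at least three factors, so `A⁵ = 0`.
Each of the three terms of the almost-Jordan identity contains a factor from `A³`, so both sides
vanish; the Jordan identity fails at `x = y = e₁`, where `((e₁e₁)e₁)e₁ = 0` but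
`(e₁e₁)(e₁e₁) = e₂e₂ = e₃`.
-/

theorem IsProdOf.one_le {V : Type*} {μ : V → V → V} {n : ℕ} {z : V} (h : IsProdOf μ n z) :
    1 ≤ n := by
  induction h with
  | base => rfl
  | mul _ _ ihm ihn => omega

theorem mul01_eq (a b : Fin 5 → ℂ) : mul01 a b = ![0, a 0 * b 0, a 1 * b 1, 0, 0] := by
  funext k
  fin_cases k <;> simp [mul01, tbl01, Fin.sum_univ_five]

theorem mul01_comm (a b : Fin 5 → ℂ) : mul01 a b = mul01 b a := by
  rw [mul01_eq, mul01_eq, mul_comm (a 0), mul_comm (a 1)]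

theorem mul01_eq_zero_of_apply_eq_zero {a : Fin 5 → ℂ} (h₀ : a 0 = 0) (h₁ : a 1 = 0)
    (b : Fin 5 → ℂ) : mul01 a b = 0 := by
  rw [mul01_eq, h₀, h₁, zero_mul, zero_mul]
  funext k
  fin_cases k <;> rfl

namespace IsProdOf

variable {n : ℕ} {z : Fin 5 → ℂ}

theorem mul01_apply_zero (h : IsProdOf mul01 n z) (hn : 2 ≤ n) : z 0 = 0 := by
  cases h with
  | base => omega
  | mul => simp [mul01_eq]

theorem mul01_apply_one (h : IsProdOf mul01 n z) (hn : 3 ≤ n) : z 1 = 0 := by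
  cases h with
  | base => omega
  | @mul m k a b ha hb =>
    have := ha.one_le
    have := hb.one_le
    rw [mul01_eq]
    rcases (by omega : 2 ≤ m ∨ 2 ≤ k) with hm | hk
    · simp [ha.mul01_apply_zero hm]
    · simp [hb.mul01_apply_zero hk]

theorem mul01_left_eq_zero (h : IsProdOf mul01 n z) (hn : 3 ≤ n) (w : Fin 5 → ℂ) :
    mul01 z w = 0 :=
  mul01_eq_zero_of_apply_eq_zero (h.mul01_apply_zero (by omega)) (h.mul01_apply_one hn) w

theorem mul01_right_eq_zero (h : IsProdOf mul01 n z) (hn : 3 ≤ n) (w : Fin 5 → ℂ) :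
    mul01 w z = 0 := by
  rw [mul01_comm, h.mul01_left_eq_zero hn]

theorem mul01_eq_zero (h : IsProdOf mul01 n z) (hn : 5 ≤ n) : z = 0 := by
  cases h with
  | base => omega
  | @mul m k a b ha hb =>
    have := ha.one_le
    have := hb.one_le
    rcases (by omega : 3 ≤ m ∨ 3 ≤ k) with hm | hk
    · exact ha.mul01_left_eq_zero hm b
    · exact hb.mul01_right_eq_zero hk a

end IsProdOf

theorem c01_properties :
    (∀ x y : Fin 5 → ℂ, mul01 x y = mul01 y x) ∧
    (∀ z : Fin 5 → ℂ, IsProdOf (mul01) 6 z → z = 0) ∧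
    (∀ x y : Fin 5 → ℂ,
        (2 : ℂ) • mul01 (mul01 (mul01 y x) x) x + mul01 y (mul01 (mul01 x x) x) =
          (3 : ℂ) • mul01 (mul01 y (mul01 x x)) x) ∧
    (∃ x y : Fin 5 → ℂ,
        mul01 (mul01 (mul01 x x) y) x ≠ mul01 (mul01 x x) (mul01 y x)) := by
  refine ⟨mul01_comm, fun z hz => hz.mul01_eq_zero (by norm_num), fun x y => ?_, ?_⟩
  · have yx_x : IsProdOf mul01 3 (mul01 (mul01 y x) x) := .mul (.mul (.base y) (.base x)) (.base x)
    have xx_x : IsProdOf mul01 3 (mul01 (mul01 x x) x) := .mul (.mul (.base x) (.base x)) (.base x)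
    have y_xx : IsProdOf mul01 3 (mul01 y (mul01 x x)) := .mul (.base y) (.mul (.base x) (.base x))
    rw [yx_x.mul01_left_eq_zero le_rfl, xx_x.mul01_right_eq_zero le_rfl,
      y_xx.mul01_left_eq_zero le_rfl]
    simp
  · refine ⟨![1, 0, 0, 0, 0], ![1, 0, 0, 0, 0], fun h => ?_⟩
    simpa [mul01_eq] using congrFun h 2
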